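/- Consider the gadget graph of the EXPSPACE-hardness reduction for the edge weight −13: states s_e, p₈, p₄, p₂, p₁, s_sink (all belonging to P₀) and s', with edges s_e →(−13) s', s_e →(+3) p₈, p₈ →(−8) p₄ and p₈ →(0) p₄, p₄ →(−4) p₂ and p₄ →(0) p₂, p₂ →(−2) p₁ and p₂ →(0) p₁, p₁ →(−1) s_sink and p₁ →(0) s_sink, and s_sink →(0) s_sink. For every c ∈ ℕ, starting from s_e with current energy level c, P₀ can enter the gadget (i.e., not take the edge to s') and reach s_sink with energy level exactly zero while keeping the energy level nonnegative at every intermediate step if, and only if, c ≤ 12; in particular, if c ≥ 13 then the only way to keep the energy level nonnegative forever and achieve average-energy zero is unavailable inside the gadget, so P₀ must take the edge to s'. -/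

import Mathlib

namespace AvgEnergy

/-- An integer-weighted edge over a state space `α`. -/
abbrev WEdge (α : Type*) : Type _ := α × ℤ × α

/-- A finite turn-based weighted game `G = (S₀, S₁, E)`:
`S₀` and `S₁` are disjoint sets of states covering `S`, edges carry integer
weights bounded in absolute value by `W`, and every state has an outgoing edge. -/
structure Game (S : Type*) where
  S0 : Set S
  S1 : Set S
  E : Set (WEdge S)
  W : ℕ
  disj : Disjoint S0 S1
  cover : S0 ∪ S1 = Set.univ
  wbound : ∀ e ∈ E, -(W : ℤ) ≤ e.2.1 ∧ e.2.1 ≤ (W : ℤ)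
  total : ∀ s : S, ∃ w s', (s, w, s') ∈ E

variable {α : Type*}

/-- A play from `s`: an infinite sequence of consecutive edges of `E` starting at `s`. -/
def IsPlay (E : Set (WEdge α)) (s : α) (π : ℕ → WEdge α) : Prop :=
  (∀ i, π i ∈ E) ∧ (π 0).1 = s ∧ ∀ i, (π i).2.2 = (π (i + 1)).1

/-- Energy level of the length-`n` prefix of `π`. -/
def EL (π : ℕ → WEdge α) (n : ℕ) : ℤ :=
  ∑ i ∈ Finset.range n, (π i).2.1

/-- Mean-payoff of the length-`n` prefix of `π`. -/
def MP (π : ℕ → WEdge α) (n : ℕ) : ℚ := (EL π n : ℚ) / n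

/-- Average-energy of the length-`n` prefix of `π`. -/
def AE (π : ℕ → WEdge α) (n : ℕ) : ℚ :=
  (∑ i ∈ Finset.range n, (EL π (i + 1) : ℚ)) / n

/-- `limsup_{n → ∞} f n ≤ t` (ε-characterization, valid in `ℚ`). -/
def LimsupLE (f : ℕ → ℚ) (t : ℚ) : Prop :=
  ∀ ε : ℚ, 0 < ε → ∃ N, ∀ n ≥ N, f n ≤ t + ε

/-- The state reached after following the finite prefix `ρ` from `s`. -/
def EndSt (s : α) (ρ : List (WEdge α)) : α :=
  (ρ.getLast?.map (fun e => e.2.2)).getD s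

/-- `ρ` is a finite play prefix from `s` in the graph with edge set `E`. -/
def IsPrefixFrom (E : Set (WEdge α)) (s : α) (ρ : List (WEdge α)) : Prop :=
  (∀ e ∈ ρ, e ∈ E) ∧ List.Chain' (fun e f => e.2.2 = f.1) ρ ∧
    ∀ e, ρ.head? = some e → e.1 = s

/-- A strategy (of the player owning the states in `S0`) from `s`: it assigns to every
play prefix from `s` ending in a state of `S0` a valid outgoing edge. -/
def IsStrategy (E : Set (WEdge α)) (S0 : Set α) (s : α)
    (σ : List (WEdge α) → WEdge α) : Prop :=
  ∀ ρ, IsPrefixFrom E s ρ → EndSt s ρ ∈ S0 → σ ρ ∈ E ∧ (σ ρ).1 = EndSt s ρ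

/-- The length-`n` prefix of a play, as a list of edges. -/
def Pref (π : ℕ → WEdge α) (n : ℕ) : List (WEdge α) :=
  List.ofFn (fun i : Fin n => π i)

/-- `π` is an outcome of the strategy `σ` (for the player owning `S0`) from `s`. -/
def IsOutcome (E : Set (WEdge α)) (S0 : Set α) (s : α)
    (σ : List (WEdge α) → WEdge α) (π : ℕ → WEdge α) : Prop :=
  IsPlay E s π ∧ ∀ n, EndSt s (Pref π n) ∈ S0 → π n = σ (Pref π n)

/-- Configurations of the expanded game: `⊥` is `none`. -/
abbrev Conf (S : Type*) := Option (S × ℕ)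

/-- Edges of the expanded infinite-state weighted game `G'`:
`((s,c), c', (s',c'))` whenever `(s,w,s') ∈ E` and `c' = c + w ≥ 0`;
`((s,c), ⌈t⌉+1, ⊥)` whenever some `(s,w,s') ∈ E` has `c + w < 0`; and
`(⊥, ⌈t⌉+1, ⊥)`. -/
def ExpE {S : Type*} (G : Game S) (t : ℚ) : Set (WEdge (Conf S)) :=
  {e | (∃ (s : S) (c : ℕ) (w : ℤ) (s' : S) (c' : ℕ), (s, w, s') ∈ G.E ∧ (c : ℤ) + w = (c' : ℤ) ∧
          e = (some (s, c), (c' : ℤ), some (s', c'))) ∨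
       (∃ (s : S) (c : ℕ) (w : ℤ) (s' : S), (s, w, s') ∈ G.E ∧ (c : ℤ) + w < 0 ∧
          e = (some (s, c), ⌈t⌉ + 1, (none : Conf S))) ∨
       e = ((none : Conf S), ⌈t⌉ + 1, (none : Conf S))}

/-- The configurations of the expanded game belonging to player `P₀`. -/
def ExpS0 {S : Type*} (G : Game S) : Set (Conf S) :=
  {γ | ∃ s c, s ∈ G.S0 ∧ γ = some (s, c)}

/-- The state (configuration) visited at position `n` along a play from `s`:
`γ₀ = s` and `γ_{n+1}` is the target of the `(n+1)`-st edge. -/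
def StAt (s : α) (π : ℕ → WEdge α) : ℕ → α
  | 0 => s
  | n + 1 => (π n).2.2

end AvgEnergy

namespace AvgEnergy

/-- The states of the gadget of the EXPSPACE-hardness reduction (for weight `−13`). -/
inductive GadSt
  | se | p8 | p4 | p2 | p1 | sink | s'
deriving DecidableEq

/-- The edges of the gadget (Figure 7 of the paper):
`s_e →(−13) s'`, `s_e →(+3) p₈`, `p₈ →(−8)/(0) p₄`, `p₄ →(−4)/(0) p₂`,
`p₂ →(−2)/(0) p₁`, `p₁ →(−1)/(0) s_sink`, and `s_sink →(0) s_sink`. -/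
def GadE : Set (WEdge GadSt) :=
  {(GadSt.se, -13, GadSt.s'), (GadSt.se, 3, GadSt.p8),
   (GadSt.p8, -8, GadSt.p4), (GadSt.p8, 0, GadSt.p4),
   (GadSt.p4, -4, GadSt.p2), (GadSt.p4, 0, GadSt.p2),
   (GadSt.p2, -2, GadSt.p1), (GadSt.p2, 0, GadSt.p1),
   (GadSt.p1, -1, GadSt.sink), (GadSt.p1, 0, GadSt.sink),
   (GadSt.sink, 0, GadSt.sink)}

/-- The sum of the weights of a list of edges. -/
def ELl {α : Type*} (ρ : List (WEdge α)) : ℤ := (ρ.map fun e => e.2.1).sum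

section Potential

variable {α : Type*}

theorem ELl_cons (e : WEdge α) (ρ : List (WEdge α)) : ELl (e :: ρ) = e.2.1 + ELl ρ := by
  simp [ELl]

theorem EndSt_cons (s : α) (e : WEdge α) (ρ : List (WEdge α)) :
    EndSt s (e :: ρ) = EndSt e.2.2 ρ := by
  cases ρ <;> simp [EndSt, List.getLast?_cons]

theorem sub_le_ELl_of_potential (φ : α → ℤ) {s : α} {ρ : List (WEdge α)}
    (hchain : List.IsChain (fun e f => e.2.2 = f.1) ρ) (hhead : ∀ e, ρ.head? = some e → e.1 = s)
    (hφ : ∀ e ∈ ρ, φ e.1 ≤ e.2.1 + φ e.2.2) :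
    φ s - φ (EndSt s ρ) ≤ ELl ρ := by
  induction ρ generalizing s with
  | nil => simp [EndSt, ELl]
  | cons e ρ ih =>
    have htail : ∀ f, ρ.head? = some f → f.1 = e.2.2 := by
      rintro f hf
      cases ρ with
      | nil => simp at hf
      | cons f' ρ =>
        obtain rfl : f' = f := by simpa using hf
        exact (List.isChain_cons_cons.mp hchain).1.symm
    have hrest := ih hchain.tail htail fun f hf => hφ f (List.mem_cons_of_mem _ hf)
    have hstep := hφ e List.mem_cons_self
    rw [hhead e rfl] at hstep
    rw [EndSt_cons, ELl_cons]
    omega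

end Potential

section Gadget

open GadSt

/-- The least total weight of an `s'`-avoiding path in the gadget starting at a state. -/
def leastWeight : GadSt → ℤ
  | se => -12
  | p8 => -15
  | p4 => -7
  | p2 => -3
  | p1 => -1
  | sink => 0
  | s' => 0

theorem leastWeight_le_of_mem_gadE {e : WEdge GadSt} (he : e ∈ GadE) (hs' : e.2.2 ≠ s') :
    leastWeight e.1 ≤ e.2.1 + leastWeight e.2.2 := by
  simp only [GadE, Set.mem_insert_iff, Set.mem_singleton_iff] at he
  rcases he with rfl | rfl | rfl | rfl | rfl | rfl | rfl | rfl | rfl | rfl | rfl <;>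
    simp_all [leastWeight]

theorem ELl_ge_of_isPrefixFrom_gadE {ρ : List (WEdge GadSt)} (hρ : IsPrefixFrom GadE se ρ)
    (hs' : ∀ e ∈ ρ, e.2.2 ≠ s') (hend : EndSt se ρ = sink) : -12 ≤ ELl ρ := by
  obtain ⟨hmem, hchain, hhead⟩ := hρ
  have := sub_le_ELl_of_potential leastWeight hchain hhead
    fun e he => leastWeight_le_of_mem_gadE (hmem e he) (hs' e he)
  simpa [hend, leastWeight] using this

/-- The path through the gadget that subtracts `n` after the initial `+3`, choosing the
edges `-8, -4, -2, -1` according to the binary digits of `n`. -/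
def binaryPath (n : ℕ) : List (WEdge GadSt) :=
  [(se, 3, p8), (p8, -(8 * (n / 8) : ℕ), p4), (p4, -(4 * (n % 8 / 4) : ℕ), p2),
    (p2, -(2 * (n % 4 / 2) : ℕ), p1), (p1, -(n % 2 : ℕ), sink)]

theorem isPrefixFrom_binaryPath {n : ℕ} (hn : n < 16) : IsPrefixFrom GadE se (binaryPath n) := by
  refine ⟨?_, show List.IsChain _ _ by simp [binaryPath], by simp [binaryPath]⟩
  have h8 : n / 8 = 0 ∨ n / 8 = 1 := by omega
  have h4 : n % 8 / 4 = 0 ∨ n % 8 / 4 = 1 := by omega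
  have h2 : n % 4 / 2 = 0 ∨ n % 4 / 2 = 1 := by omega
  have h1 : n % 2 = 0 ∨ n % 2 = 1 := by omega
  simp only [binaryPath, List.mem_cons, List.not_mem_nil, or_false]
  rintro e (rfl | rfl | rfl | rfl | rfl) <;>
    rcases h8 with h8 | h8 <;> rcases h4 with h4 | h4 <;> rcases h2 with h2 | h2 <;>
    rcases h1 with h1 | h1 <;> simp [GadE, h8, h4, h2, h1]

theorem binaryPath_avoids (n : ℕ) : ∀ e ∈ binaryPath n, e.2.2 ≠ s' := by
  simp [binaryPath]

theorem EndSt_binaryPath (n : ℕ) : EndSt se (binaryPath n) = sink := rfl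

theorem add_ELl_take_binaryPath_nonneg (c : ℕ) {k : ℕ} (hk : k ≤ (binaryPath (c + 3)).length) :
    0 ≤ (c : ℤ) + ELl ((binaryPath (c + 3)).take k) := by
  simp only [binaryPath, List.length_cons, List.length_nil] at hk
  -- the energy levels are `c`, `c + 3`, `(c + 3) % 8`, `(c + 3) % 4`, `(c + 3) % 2` and `0`
  interval_cases k <;> simp [binaryPath, ELl] <;> omega

theorem ELl_binaryPath (n : ℕ) : ELl (binaryPath n) = 3 - n := by
  simp [binaryPath, ELl]
  omega

end Gadget

/-- In the gadget, for every initial energy level `c ∈ ℕ` at `s_e`: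
`P₀` (who owns all gadget states) can move from `s_e` while avoiding `s'` and reach
`s_sink` with energy level exactly zero, keeping the energy level nonnegative at every
intermediate step, if and only if `c ≤ 12`. (In particular, if `c ≥ 13`, `P₀` cannot
achieve this inside the gadget and must take the edge to `s'`.) -/
theorem statement12 (c : ℕ) :
    (∃ ρ : List (WEdge GadSt),
      IsPrefixFrom GadE GadSt.se ρ ∧
      (∀ e ∈ ρ, e.2.2 ≠ GadSt.s') ∧
      EndSt GadSt.se ρ = GadSt.sink ∧
      (∀ k ≤ ρ.length, 0 ≤ (c : ℤ) + ELl (ρ.take k)) ∧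
      (c : ℤ) + ELl ρ = 0) ↔ c ≤ 12 := by
  constructor
  · rintro ⟨ρ, hρ, hs', hend, -, hzero⟩
    have := ELl_ge_of_isPrefixFrom_gadE hρ hs' hend
    omega
  · intro hc
    have hn : c + 3 < 16 := by omega
    refine ⟨binaryPath (c + 3), isPrefixFrom_binaryPath hn, binaryPath_avoids _,
      EndSt_binaryPath _, fun k hk => add_ELl_take_binaryPath_nonneg c hk, ?_⟩
    rw [ELl_binaryPath]
    push_cast
    ring

end AvgEnergy
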